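/- For every positive integer m, the 4-coloring of [8m+6] with prefix B, C, C, then the block ABCC repeated m times, then the block DDAB repeated m times, then D, B, A, contains no rainbow 4-term arithmetic progression. -/
import Mathlib


inductive Color | A | B | C | D
  deriving DecidableEq

open Color

/-- A coloring `c` of `{1,...,n}` contains a rainbow 4-term AP. -/
def RainbowAP4 (n : ℕ) (c : ℕ → Color) : Prop :=
  ∃ t d : ℕ, 1 ≤ t ∧ 1 ≤ d ∧ t + 3*d ≤ n ∧
    c t ≠ c (t+d) ∧ c t ≠ c (t+2*d) ∧ c t ≠ c (t+3*d) ∧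
    c (t+d) ≠ c (t+2*d) ∧ c (t+d) ≠ c (t+3*d) ∧ c (t+2*d) ≠ c (t+3*d)

/-- The coloring for STATEMENT 8. -/
def col (m i : ℕ) : Color :=
  if i = 1 then B else if i ≤ 3 then C else if i ≤ 4*m+3 then (if i % 4 = 0 then A else if i % 4 = 1 then B else C) else if i ≤ 8*m+3 then (if i % 4 = 0 ∨ i % 4 = 1 then D else if i % 4 = 2 then A else B) else if i = 8*m+4 then D else if i = 8*m+5 then B else A

lemma col_facts (m x : ℕ) (h1 : 1 ≤ x) (h2 : x ≤ 8*m+6) :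
    (col m x = A → ((x ≤ 4*m+3 ∧ x % 4 = 0) ∨ (4*m+4 ≤ x ∧ x % 4 = 2))) ∧
    (col m x = B → ((x ≤ 4*m+3 ∧ x % 4 = 1) ∨ (4*m+4 ≤ x ∧ x ≤ 8*m+3 ∧ x % 4 = 3) ∨ x = 8*m+5)) ∧
    (col m x = C → (x ≤ 4*m+3 ∧ (x % 4 = 2 ∨ x % 4 = 3))) ∧
    (col m x = D → (4*m+4 ≤ x ∧ x ≤ 8*m+4 ∧ (x % 4 = 0 ∨ x % 4 = 1))) := by
  unfold col
  split_ifs <;> simp_all <;> omega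

set_option maxHeartbeats 2000000 in
theorem stmt_8 (m : ℕ) (hm : 0 < m) :
    ¬ RainbowAP4 (8*m+6) (col m) := by
  rintro ⟨t, d, ht, hd, hle, h01, h02, h03, h12, h13, h23⟩
  obtain ⟨A0, B0, C0, D0⟩ := col_facts m t (by omega) (by omega)
  obtain ⟨A1, B1, C1, D1⟩ := col_facts m (t+d) (by omega) (by omega)
  obtain ⟨A2, B2, C2, D2⟩ := col_facts m (t+2*d) (by omega) (by omega)
  obtain ⟨A3, B3, C3, D3⟩ := col_facts m (t+3*d) (by omega) (by omega)
  generalize hg0 : col m t = c0 at A0 B0 C0 D0 h01 h02 h03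
  generalize hg1 : col m (t+d) = c1 at A1 B1 C1 D1 h01 h12 h13
  generalize hg2 : col m (t+2*d) = c2 at A2 B2 C2 D2 h02 h12 h23
  generalize hg3 : col m (t+3*d) = c3 at A3 B3 C3 D3 h03 h13 h23
  clear hg0 hg1 hg2 hg3
  cases c0 <;> cases c1 <;> cases c2 <;> cases c3 <;>
    simp_all <;> omega
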